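/- Suppose the rate-distortion function R(D) is strictly convex on (0, D_max). If the degeneracy condition holds at infinitely many D ∈ (0, D_max), then P is the uniform distribution on A and ρ is a permutation distortion measure. -/

import Mathlib

open Real Finset

/-- `Q` is a probability mass function on `Fin k`. -/
def IsPmf {k : ℕ} (Q : Fin k → ℝ) : Prop := (∀ j, 0 ≤ Q j) ∧ ∑ j, Q j = 1

/-- `Λ_{P,Q}(λ) = Σ_i P_i · ln (Σ_j Q_j e^{λ ρ_ij})`. -/
noncomputable def Lam {k : ℕ} (P : Fin k → ℝ) (ρ : Fin k → Fin k → ℝ)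
    (Q : Fin k → ℝ) (l : ℝ) : ℝ :=
  ∑ i, P i * Real.log (∑ j, Q j * Real.exp (l * ρ i j))

/-- The cost `Σ_{i,j} P_i W_ij log₂ (W_ij / Q_j)` of a transition matrix `W`, with the
conventions `0 · log 0 = 0` (automatic in Lean since `Real.log 0 = 0`) and value `⊤`
if `W i j > 0` for some `j` with `Q j = 0`. -/
noncomputable def wCost {k : ℕ} (P Q : Fin k → ℝ) (W : Fin k → Fin k → ℝ) : EReal :=
  if ∀ i j, 0 < W i j → 0 < Q j then
    (((∑ i, ∑ j, P i * W i j * Real.logb 2 (W i j / Q j)) : ℝ) : EReal)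
  else ⊤

/-- `R(P,Q,D)`: infimum over row-stochastic matrices `W` with
`Σ_{i,j} P_i W_ij ρ_ij ≤ D` of the relative-entropy cost. -/
noncomputable def RPQ {k : ℕ} (P : Fin k → ℝ) (ρ : Fin k → Fin k → ℝ)
    (Q : Fin k → ℝ) (D : ℝ) : EReal :=
  ⨅ W ∈ {W : Fin k → Fin k → ℝ | (∀ i j, 0 ≤ W i j) ∧ (∀ i, ∑ j, W i j = 1) ∧
      ∑ i, ∑ j, P i * W i j * ρ i j ≤ D}, wCost P Q W

/-- The rate-distortion function `R(D) = inf_Q R(P,Q,D)`. -/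
noncomputable def RofD {k : ℕ} (P : Fin k → ℝ) (ρ : Fin k → Fin k → ℝ) (D : ℝ) : EReal :=
  ⨅ Q ∈ {Q : Fin k → ℝ | IsPmf Q}, RPQ P ρ Q D

/-- `D_max = min_j Σ_i P_i ρ_ij`. -/
noncomputable def Dmax {k : ℕ} (P : Fin k → ℝ) (ρ : Fin k → Fin k → ℝ) : ℝ :=
  sInf (Set.range fun j => ∑ i, P i * ρ i j)

/-- `ρ` is a permutation distortion measure: all rows of `(ρ_ij)` are permutations
of one another. -/
def IsPermMeasure {k : ℕ} (ρ : Fin k → Fin k → ℝ) : Prop :=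
  ∀ i i' : Fin k, ∃ σ : Equiv.Perm (Fin k), ∀ j, ρ i' j = ρ i (σ j)

/-- The degeneracy condition at distortion level `D`: there are a pmf `Q*` achieving
`R(P,Q*,D) = R(D)` and `λ* < 0` with `Λ'_{P,Q*}(λ*) = D`,
`λ*·D − Λ_{P,Q*}(λ*) = (ln 2)·R(D)`, and `Σ_j Q*_j e^{λ* ρ_ij}` independent of `i`. -/
def DegenAt {k : ℕ} (P : Fin k → ℝ) (ρ : Fin k → Fin k → ℝ) (D : ℝ) : Prop :=
  ∃ Q : Fin k → ℝ, IsPmf Q ∧ RPQ P ρ Q D = RofD P ρ D ∧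
    ∃ l : ℝ, l < 0 ∧ HasDerivAt (Lam P ρ Q) D l ∧
      ((l * D - Lam P ρ Q l : ℝ) : EReal) = (Real.log 2 : EReal) * RofD P ρ D ∧
      ∃ c : ℝ, ∀ i, ∑ j, Q j * Real.exp (l * ρ i j) = c

open Filter Topology

/-!
At a degenerate `D` with tilt `l < 0`, the optimal output distribution `Q` satisfies
`∑_j Q_j e^{l ρ_ij} = c` for every `i`. The tilted channel `W_ij = Q_j e^{l ρ_ij} / c` has
distortion `D` and rate `R(D) = (l D - log c) / log 2` relative to its own output distribution,
so Gibbs' inequality forces that output distribution to be `Q`: `∑_i P_i e^{l ρ_ij} = c` whenever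
`Q_j > 0`.

Strict convexity of `R` forbids infinitely many `D` with the same line `(l D - log c) / log 2`,
so infinitely many tilts occur, all with one and the same support `b` of `Q`. If `b` is proper, the
system `∑_{j ∈ b} x_j e^{t ρ_ij} = 1` is solvable for infinitely many `t < 0`, so the determinant
of its augmented matrix, an analytic function of `t`, vanishes on them and hence (by the identity
theorem if they accumulate) along a sequence tending to `-∞`; but it tends to `1` there. So
`b` is everything and the functions `t ↦ ∑_i P_i e^{t ρ_ij}` agree along a sequence tending to
`-∞`. Comparing exponential sums, all columns of `ρ` have the same law under `P`. The atom at
`0` gives `P_j = P_{j'}`, and for uniform `P` and symmetric `ρ` equal laws mean rows that are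
permutations of each other.
-/

lemma tendsto_exp_mul_atBot {a : ℝ} (ha : 0 < a) :
    Tendsto (fun x => exp (x * a)) atBot (𝓝 0) :=
  tendsto_exp_atBot.comp (tendsto_id.atBot_mul_const ha)

theorem eq_zero_of_frequently_sum_mul_exp_eq_zero (T : Finset ℝ) {a : ℝ → ℝ}
    (h : ∃ᶠ x in atBot, ∑ t ∈ T, a t * exp (x * t) = 0) : ∀ t ∈ T, a t = 0 := by
  classical
  induction T using Finset.induction_on_min with
  | empty => simp
  | insert s T hs ih =>
    have hsT : s ∉ T := fun h => lt_irrefl s (hs s h)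
    -- as `x → -∞` the term with the smallest exponent `s` dominates
    have hlim : Tendsto (fun x => a s + ∑ t ∈ T, a t * exp (x * (t - s))) atBot (𝓝 (a s)) := by
      simpa using tendsto_const_nhds.add
        (tendsto_finsetSum T fun t ht =>
          (tendsto_exp_mul_atBot (sub_pos.2 (hs t ht))).const_mul (a t))
    have hscaled : ∀ x, (∑ t ∈ insert s T, a t * exp (x * t)) * exp (-(x * s))
        = a s + ∑ t ∈ T, a t * exp (x * (t - s)) := by
      intro x
      rw [Finset.sum_insert hsT, add_mul, Finset.sum_mul, mul_assoc, ← exp_add, add_neg_cancel,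
        exp_zero, mul_one]
      congr 1
      refine Finset.sum_congr rfl fun t _ => ?_
      rw [mul_assoc, ← exp_add]; ring_nf
    have has : a s = 0 := tendsto_nhds_unique_of_frequently_eq hlim tendsto_const_nhds
      (h.mono fun x hx => by rw [← hscaled, hx, zero_mul])
    have hT : ∀ t ∈ T, a t = 0 := ih (h.mono fun x hx => by
      rwa [Finset.sum_insert hsT, has, zero_mul, zero_add] at hx)
    simpa [has] using hT

/-- The moment generating function of `ρ(X, a_j)` for `X ∼ P`. -/
noncomputable def colMgf {k : ℕ} (P : Fin k → ℝ) (ρ : Fin k → Fin k → ℝ) (j : Fin k) (x : ℝ) : ℝ :=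
  ∑ i, P i * exp (x * ρ i j)

/-- The law of `ρ(X, a_j)` for `X ∼ P`. -/
noncomputable def colLaw {k : ℕ} (P : Fin k → ℝ) (ρ : Fin k → Fin k → ℝ) (j : Fin k) (t : ℝ) : ℝ :=
  ∑ i ∈ univ.filter (fun i => ρ i j = t), P i

section ColumnLaws

variable {k : ℕ} {P : Fin k → ℝ} {ρ : Fin k → Fin k → ℝ}

lemma analyticOnNhd_colMgf (j : Fin k) : AnalyticOnNhd ℝ (colMgf P ρ j) Set.univ := by
  unfold colMgf
  refine Finset.analyticOnNhd_fun_sum _ fun i _ => analyticOnNhd_const.mul ?_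
  exact analyticOnNhd_rexp.comp (analyticOnNhd_id.mul analyticOnNhd_const) (Set.mapsTo_univ _ _)

lemma colMgf_eq_sum_colLaw (j : Fin k) (x : ℝ) :
    colMgf P ρ j x = ∑ t ∈ univ.image (fun p : Fin k × Fin k => ρ p.1 p.2),
      colLaw P ρ j t * exp (x * t) := by
  classical
  rw [colMgf, ← Finset.sum_fiberwise_of_maps_to (g := fun i => ρ i j)
    (fun i _ => Finset.mem_image_of_mem (fun p : Fin k × Fin k => ρ p.1 p.2)
      (Finset.mem_univ (i, j)))]
  refine Finset.sum_congr rfl fun t _ => ?_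
  rw [colLaw, Finset.sum_mul]
  exact Finset.sum_congr rfl fun i hi => by rw [(Finset.mem_filter.1 hi).2]

lemma colLaw_eq_of_frequently_colMgf_eq {j j' : Fin k}
    (h : ∃ᶠ x in atBot, colMgf P ρ j x = colMgf P ρ j' x) (t : ℝ) :
    colLaw P ρ j t = colLaw P ρ j' t := by
  classical
  set T := univ.image (fun p : Fin k × Fin k => ρ p.1 p.2)
  by_cases ht : t ∈ T
  · refine sub_eq_zero.1 (eq_zero_of_frequently_sum_mul_exp_eq_zero T
      (a := fun t => colLaw P ρ j t - colLaw P ρ j' t) (h.mono fun x hx => ?_) t ht)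
    rw [Finset.sum_congr rfl fun t _ => sub_mul _ _ _, Finset.sum_sub_distrib,
      ← colMgf_eq_sum_colLaw, ← colMgf_eq_sum_colLaw, hx, sub_self]
  · have hempty : ∀ j, univ.filter (fun i => ρ i j = t) = ∅ := fun j =>
      Finset.filter_false_of_mem fun i _ hi => ht (Finset.mem_image.2 ⟨(i, j), mem_univ _, hi⟩)
    simp only [colLaw, hempty, Finset.sum_empty]

lemma colLaw_zero (hρ : ∀ i j, ρ i j = 0 ↔ i = j) (j : Fin k) : colLaw P ρ j 0 = P j := by
  simp [colLaw, hρ, Finset.filter_eq']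

lemma colLaw_of_uniform (hP : ∀ i, P i = 1 / k) (j : Fin k) (t : ℝ) :
    colLaw P ρ j t = #(univ.filter (fun i => ρ i j = t)) * (1 / k) := by
  simp [colLaw, hP]

end ColumnLaws

lemma IsPmf.eq_one_div_of_forall_eq {k : ℕ} {P : Fin k → ℝ} (hP : IsPmf P)
    (h : ∀ i j, P i = P j) (i : Fin k) : P i = 1 / k := by
  have hsum : (k : ℝ) * P i = 1 := by
    rw [← hP.2, Finset.sum_congr rfl fun j _ => h j i]
    simp
  rw [eq_div_iff (by rintro hk; simp [hk] at hsum)]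
  linarith

lemma exists_perm_of_card_fiber_eq {k : ℕ} (f g : Fin k → ℝ)
    (h : ∀ t, #(univ.filter (fun j => f j = t)) = #(univ.filter (fun j => g j = t))) :
    ∃ σ : Equiv.Perm (Fin k), ∀ j, g j = f (σ j) := by
  have e : ∀ t, {a // g a = t} ≃ {b // f b = t} := fun t =>
    Fintype.equivOfCardEq (by rw [Fintype.card_subtype, Fintype.card_subtype, h])
  exact ⟨Equiv.ofFiberEquiv e, fun j => (Equiv.ofFiberEquiv_map e j).symm⟩

lemma isPermMeasure_of_card_fiber_eq {k : ℕ} {ρ : Fin k → Fin k → ℝ}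
    (hρsym : ∀ i j, ρ i j = ρ j i)
    (h : ∀ j j' t, #(univ.filter (fun i => ρ i j = t)) = #(univ.filter (fun i => ρ i j' = t))) :
    IsPermMeasure ρ := fun i i' => exists_perm_of_card_fiber_eq _ _ fun t => by
  simpa only [hρsym i, hρsym i'] using h i i' t

lemma StrictConvexOn.finite_eq_affine {s : Set ℝ} {f : ℝ → ℝ} (hf : StrictConvexOn ℝ s f)
    (a b : ℝ) : {x ∈ s | f x = a * x + b}.Finite := by
  by_contra hinf
  obtain ⟨t, hts, ht⟩ := Set.Infinite.exists_subset_card_eq hinf 3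
  set e := t.orderEmbOfFin ht
  have he : ∀ i, e i ∈ s ∧ f (e i) = a * e i + b := fun i => hts (t.orderEmbOfFin_mem ht i)
  have hslope : ∀ {i i'}, i < i' → (f (e i') - f (e i)) / (e i' - e i) = a := fun h => by
    rw [(he _).2, (he _).2, div_eq_iff (sub_ne_zero.2 (e.strictMono h).ne')]
    ring
  have key := hf.slope_strict_mono_adjacent (he 0).1 (he 2).1
    (e.strictMono (show (0 : Fin 3) < 1 by decide)) (e.strictMono (show (1 : Fin 3) < 2 by decide))
  rw [hslope (by decide), hslope (by decide)] at key
  exact lt_irrefl a key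

lemma StrictConvexOn.infinite_image_of_eq_affine {s S : Set ℝ} {f : ℝ → ℝ}
    (hf : StrictConvexOn ℝ s f) (hS : S ⊆ s) (hinf : S.Infinite) (p : ℝ → ℝ × ℝ)
    (hp : ∀ x ∈ S, f x = (p x).1 * x + (p x).2) : (p '' S).Infinite := fun hfin =>
  hinf <| (hfin.biUnion fun q _ => hf.finite_eq_affine q.1 q.2).subset fun x hx =>
    Set.mem_biUnion (Set.mem_image_of_mem p hx) ⟨hS hx, hp x hx⟩

lemma AnalyticOnNhd.frequently_atBot_eq_zero {f : ℝ → ℝ} (hf : AnalyticOnNhd ℝ f Set.univ)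
    {S : Set ℝ} (hS : S.Infinite) (hSa : BddAbove S) (hfS : ∀ x ∈ S, f x = 0) :
    ∃ᶠ x in atBot, f x = 0 := by
  by_cases hSb : BddBelow S
  · obtain ⟨a, ha⟩ := hSb
    obtain ⟨b, hb⟩ := hSa
    obtain ⟨x, -, hx⟩ := hS.exists_accPt_of_subset_isCompact isCompact_Icc
      fun y hy => ⟨ha hy, hb hy⟩
    have hzero := hf.eqOn_zero_of_preconnected_of_frequently_eq_zero isPreconnected_univ
      (Set.mem_univ x) ((accPt_iff_frequently_nhdsNE.1 hx).mono hfS)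
    exact Frequently.of_forall fun y => hzero (Set.mem_univ y)
  · refine frequently_atBot.2 fun a => ?_
    obtain ⟨y, hy, hya⟩ := not_bddBelow_iff.1 hSb a
    exact ⟨y, hya.le, hfS y hy⟩

section AugmentedMatrix

variable {k : ℕ} {ρ : Fin k → Fin k → ℝ}

lemma tendsto_exp_mul_atBot_ite (hρnn : ∀ i j, 0 ≤ ρ i j) (hρ : ∀ i j, ρ i j = 0 ↔ i = j)
    (i j : Fin k) : Tendsto (fun t => exp (t * ρ i j)) atBot (𝓝 (if i = j then 1 else 0)) := by
  split_ifs with hij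
  · simp [(hρ i j).2 hij]
  · exact tendsto_exp_mul_atBot ((hρnn i j).lt_of_ne fun h => hij ((hρ i j).1 h.symm))

/-- The matrix of the system `∑_{j ∈ b} x_j e^{t ρ_ij} = 1`, `i ∈ b ∪ {i₀}`, augmented by its
right-hand side: row `none` is row `i₀`, column `none` is the constant column. -/
noncomputable def augMatrix (ρ : Fin k → Fin k → ℝ) (b : Finset (Fin k)) (i₀ : Fin k) (t : ℝ) :
    Matrix (Option b) (Option b) ℝ :=
  Matrix.of fun r c => c.elim 1 fun j => exp (t * ρ (r.elim i₀ Subtype.val) j)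

lemma analyticOnNhd_det_augMatrix (b : Finset (Fin k)) (i₀ : Fin k) :
    AnalyticOnNhd ℝ (fun t => (augMatrix ρ b i₀ t).det) Set.univ := by
  have hentry : ∀ r c, AnalyticOnNhd ℝ (fun t => augMatrix ρ b i₀ t r c) Set.univ := by
    rintro r (_ | j)
    · exact analyticOnNhd_const
    · exact analyticOnNhd_rexp.comp (analyticOnNhd_id.mul analyticOnNhd_const)
        (Set.mapsTo_univ _ _)
  simp only [Matrix.det_apply, Units.smul_def, zsmul_eq_mul]
  exact Finset.analyticOnNhd_fun_sum _ fun σ _ =>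
    analyticOnNhd_const.mul (Finset.analyticOnNhd_fun_prod _ fun r _ => hentry _ _)

lemma tendsto_augMatrix_atBot (hρnn : ∀ i j, 0 ≤ ρ i j) (hρ : ∀ i j, ρ i j = 0 ↔ i = j)
    {b : Finset (Fin k)} {i₀ : Fin k} (hi₀ : i₀ ∉ b) :
    Tendsto (augMatrix ρ b i₀) atBot
      (𝓝 ((1 : Matrix (Option b) (Option b) ℝ).updateCol none 1)) := by
  refine tendsto_pi_nhds.2 fun r => tendsto_pi_nhds.2 fun c => ?_
  rcases c with _ | j
  · simp [augMatrix]
  · convert tendsto_exp_mul_atBot_ite hρnn hρ (r.elim i₀ Subtype.val) j using 2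
    · rfl
    rw [Matrix.updateCol_ne (Option.some_ne_none j)]
    rcases r with _ | a
    · have : i₀ ≠ j := fun h => hi₀ (h ▸ j.2)
      simp [this]
    · simp only [Matrix.one_apply, Option.some_inj, Option.elim_some, Subtype.ext_iff]
      congr

lemma tendsto_det_augMatrix_atBot (hρnn : ∀ i j, 0 ≤ ρ i j) (hρ : ∀ i j, ρ i j = 0 ↔ i = j)
    {b : Finset (Fin k)} {i₀ : Fin k} (hi₀ : i₀ ∉ b) :
    Tendsto (fun t => (augMatrix ρ b i₀ t).det) atBot (𝓝 1) := by
  have hlim := (continuous_id.matrix_det.tendsto _).comp (tendsto_augMatrix_atBot hρnn hρ hi₀)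
  rwa [Function.comp_def, id, ← Matrix.cramer_apply, Matrix.cramer_one] at hlim

lemma det_augMatrix_eq_zero {b : Finset (Fin k)} {i₀ : Fin k} {t : ℝ} {x : Fin k → ℝ}
    (hx : ∀ i, ∑ j ∈ b, x j * exp (t * ρ i j) = 1) : (augMatrix ρ b i₀ t).det = 0 := by
  refine Matrix.exists_mulVec_eq_zero_iff.1 ⟨fun c => c.elim (-1) fun j => x j, ?_, ?_⟩
  · intro h
    simpa using congrFun h none
  · ext r
    simp only [Matrix.mulVec, dotProduct, Fintype.sum_option, augMatrix, Matrix.of_apply,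
      Option.elim_none, Option.elim_some, Pi.zero_apply]
    rw [Finset.sum_coe_sort b fun j => exp (t * ρ (r.elim i₀ Subtype.val) j) * x j]
    simp_rw [mul_comm (exp _), hx]
    ring

theorem finite_of_forall_exists_sum_mul_exp_eq_one (hρnn : ∀ i j, 0 ≤ ρ i j)
    (hρ : ∀ i j, ρ i j = 0 ↔ i = j) {b : Finset (Fin k)} (hb : b ≠ univ) {L : Set ℝ}
    (hL : BddAbove L) (h : ∀ t ∈ L, ∃ x : Fin k → ℝ, ∀ i, ∑ j ∈ b, x j * exp (t * ρ i j) = 1) :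
    L.Finite := by
  obtain ⟨i₀, hi₀⟩ : ∃ i₀, i₀ ∉ b := by simpa [Finset.eq_univ_iff_forall] using hb
  by_contra hinf
  have hzero := (analyticOnNhd_det_augMatrix (ρ := ρ) b i₀).frequently_atBot_eq_zero hinf hL
    fun t ht => (h t ht).elim fun _ hx => det_augMatrix_eq_zero hx
  obtain ⟨t, h0, h1⟩ := (hzero.and_eventually
    ((tendsto_det_augMatrix_atBot hρnn hρ hi₀).eventually_ne one_ne_zero)).exists
  exact h1 h0

end AugmentedMatrix

lemma mul_log_div_le_sub {u v : ℝ} (hu : 0 ≤ u) (hv : 0 ≤ v) (huv : 0 < u → 0 < v) :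
    u * log (v / u) ≤ v - u := by
  rcases hu.eq_or_lt with rfl | hu
  · simpa using hv
  calc u * log (v / u) ≤ u * (v / u - 1) :=
        mul_le_mul_of_nonneg_left (log_le_sub_one_of_pos (div_pos (huv hu) hu)) hu.le
    _ = v - u := by field_simp

lemma mul_log_div_lt_sub {u v : ℝ} (hu : 0 ≤ u) (hv : 0 ≤ v) (huv : 0 < u → 0 < v)
    (hne : u ≠ v) : u * log (v / u) < v - u := by
  rcases hu.eq_or_lt with rfl | hu
  · simpa using hv.lt_of_ne hne
  have hlt := log_lt_sub_one_of_pos (div_pos (huv hu) hu)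
    (by rwa [Ne, div_eq_one_iff_eq hu.ne', eq_comm])
  calc u * log (v / u) < u * (v / u - 1) := mul_lt_mul_of_pos_left hlt hu
    _ = v - u := by field_simp

theorem IsPmf.eq_of_sum_mul_log_div_nonneg {k : ℕ} {u v : Fin k → ℝ} (hu : IsPmf u)
    (hv : IsPmf v) (huv : ∀ j, 0 < u j → 0 < v j) (h : 0 ≤ ∑ j, u j * log (v j / u j)) :
    u = v := by
  by_contra hne
  obtain ⟨j, hj⟩ := Function.ne_iff.1 hne
  have hlt : ∑ j, u j * log (v j / u j) < ∑ j, (v j - u j) :=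
    Finset.sum_lt_sum (fun j _ => mul_log_div_le_sub (hu.1 j) (hv.1 j) (huv j))
      ⟨j, mem_univ j, mul_log_div_lt_sub (hu.1 j) (hv.1 j) (huv j) hj⟩
  rw [Finset.sum_sub_distrib, hu.2, hv.2, sub_self] at hlt
  linarith

lemma EReal.eq_coe_div_of_coe_eq_coe_mul {a x : ℝ} {y : EReal} (ha : 0 < a)
    (h : (x : EReal) = a * y) : y = ((x / a : ℝ) : EReal) := by
  induction y using EReal.rec with
  | bot => rw [EReal.coe_mul_bot_of_pos ha] at h; exact absurd h (EReal.coe_ne_bot x)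
  | top => rw [EReal.coe_mul_top_of_pos ha] at h; exact absurd h (EReal.coe_ne_top x)
  | coe y =>
    rw [← EReal.coe_mul, EReal.coe_eq_coe_iff] at h
    rw [h, mul_div_cancel_left₀ y ha.ne']

section Tilt

variable {k : ℕ} {P Q : Fin k → ℝ} {ρ : Fin k → Fin k → ℝ}

lemma IsPmf.exists_pos (hQ : IsPmf Q) : ∃ j, 0 < Q j := by
  by_contra! h
  have := Finset.sum_nonpos fun j (_ : j ∈ univ) => h j
  linarith [hQ.2]

lemma IsPmf.sum_mul_exp_pos (hQ : IsPmf Q) (f : Fin k → ℝ) : 0 < ∑ j, Q j * exp (f j) :=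
  let ⟨j, hj⟩ := hQ.exists_pos
  Finset.sum_pos' (fun j _ => mul_nonneg (hQ.1 j) (exp_pos _).le)
    ⟨j, mem_univ j, mul_pos hj (exp_pos _)⟩

lemma colMgf_pos (hP : IsPmf P) (j : Fin k) (x : ℝ) : 0 < colMgf P ρ j x :=
  hP.sum_mul_exp_pos _

lemma hasDerivAt_Lam {l : ℝ} (hpos : ∀ i, 0 < ∑ j, Q j * exp (l * ρ i j)) :
    HasDerivAt (Lam P ρ Q)
      (∑ i, P i * ((∑ j, Q j * (ρ i j * exp (l * ρ i j))) / ∑ j, Q j * exp (l * ρ i j))) l := by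
  have hrow : ∀ i, HasDerivAt (fun x => ∑ j, Q j * exp (x * ρ i j))
      (∑ j, Q j * (ρ i j * exp (l * ρ i j))) l := fun i =>
    HasDerivAt.fun_sum fun j _ =>
      ((hasDerivAt_mul_const (ρ i j)).exp.const_mul (Q j)).congr_deriv (by ring)
  exact HasDerivAt.fun_sum fun i _ => ((hrow i).log (hpos i).ne').const_mul (P i)

lemma Lam_eq_log (hP : ∑ i, P i = 1) {l c : ℝ} (hrow : ∀ i, ∑ j, Q j * exp (l * ρ i j) = c) :
    Lam P ρ Q l = log c := by
  simp only [Lam, hrow, ← Finset.sum_mul, hP, one_mul]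

lemma RofD_le_wCost {q : Fin k → ℝ} {W : Fin k → Fin k → ℝ} {D : ℝ} (hq : IsPmf q)
    (hW0 : ∀ i j, 0 ≤ W i j) (hW1 : ∀ i, ∑ j, W i j = 1)
    (hD : ∑ i, ∑ j, P i * W i j * ρ i j ≤ D) : RofD P ρ D ≤ wCost P q W :=
  (iInf₂_le q hq).trans (iInf₂_le W ⟨hW0, hW1, hD⟩)

noncomputable def tiltChannel (ρ : Fin k → Fin k → ℝ) (Q : Fin k → ℝ) (l c : ℝ) (i j : Fin k) :
    ℝ :=
  Q j * exp (l * ρ i j) / c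

variable {l c : ℝ}

lemma tiltChannel_nonneg (hQ : ∀ j, 0 ≤ Q j) (hc : 0 < c) (i j : Fin k) :
    0 ≤ tiltChannel ρ Q l c i j :=
  div_nonneg (mul_nonneg (hQ j) (exp_pos _).le) hc.le

lemma sum_tiltChannel (hc : 0 < c) (hrow : ∀ i, ∑ j, Q j * exp (l * ρ i j) = c) (i : Fin k) :
    ∑ j, tiltChannel ρ Q l c i j = 1 := by
  simp only [tiltChannel]
  rw [← Finset.sum_div, hrow, div_self hc.ne']

/-- The output distribution `q_j = ∑_i P_i W_ij` of the tilted channel. -/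
noncomputable def tiltOutput (P : Fin k → ℝ) (ρ : Fin k → Fin k → ℝ) (Q : Fin k → ℝ) (l c : ℝ)
    (j : Fin k) : ℝ :=
  Q j * colMgf P ρ j l / c

lemma sum_mul_tiltChannel (j : Fin k) :
    ∑ i, P i * tiltChannel ρ Q l c i j = tiltOutput P ρ Q l c j := by
  simp only [tiltChannel, tiltOutput, colMgf, Finset.mul_sum, Finset.sum_div]
  exact Finset.sum_congr rfl fun i _ => by ring

lemma tiltOutput_pos_iff (hP : IsPmf P) (hc : 0 < c) (j : Fin k) :
    0 < tiltOutput P ρ Q l c j ↔ 0 < Q j := by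
  rw [tiltOutput, div_pos_iff_of_pos_right hc, mul_pos_iff_of_pos_right (colMgf_pos hP j l)]

lemma isPmf_tiltOutput (hP : IsPmf P) (hQ : IsPmf Q) (hc : 0 < c)
    (hrow : ∀ i, ∑ j, Q j * exp (l * ρ i j) = c) : IsPmf (tiltOutput P ρ Q l c) := by
  refine ⟨fun j => div_nonneg (mul_nonneg (hQ.1 j) (colMgf_pos hP j l).le) hc.le, ?_⟩
  rw [Finset.sum_congr rfl fun j _ => (sum_mul_tiltChannel j).symm, Finset.sum_comm]
  simp_rw [← Finset.mul_sum, sum_tiltChannel hc hrow, mul_one, hP.2]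

lemma mul_tiltChannel_mul_log (hQ : ∀ j, 0 ≤ Q j) (hc : 0 < c) {q : Fin k → ℝ}
    (hq : ∀ j, 0 < Q j → 0 < q j) (p : ℝ) (i j : Fin k) :
    p * tiltChannel ρ Q l c i j * log (tiltChannel ρ Q l c i j / q j)
      = p * tiltChannel ρ Q l c i j * (l * ρ i j - log c + log (Q j / q j)) := by
  rcases (hQ j).eq_or_lt with hQj | hQj
  · rw [tiltChannel, ← hQj]
    simp
  · have hqj := hq j hQj
    rw [tiltChannel, log_div (by positivity) hqj.ne', log_div (by positivity) hc.ne',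
      log_mul hQj.ne' (exp_pos _).ne', log_exp, log_div hQj.ne' hqj.ne']
    ring

end Tilt

section Degenerate

variable {k : ℕ} {P Q : Fin k → ℝ} {ρ : Fin k → Fin k → ℝ} {l c D : ℝ}

lemma wCost_tiltChannel (hP : IsPmf P) (hQ : IsPmf Q) (hc : 0 < c)
    (hrow : ∀ i, ∑ j, Q j * exp (l * ρ i j) = c)
    (hD : ∑ i, ∑ j, P i * tiltChannel ρ Q l c i j * ρ i j = D) :
    wCost P (tiltOutput P ρ Q l c) (tiltChannel ρ Q l c)
      = (((l * D - log c + ∑ j, tiltOutput P ρ Q l c j * log (Q j / tiltOutput P ρ Q l c j))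
          / log 2 : ℝ) : EReal) := by
  set q := tiltOutput P ρ Q l c
  set W := tiltChannel ρ Q l c
  have hqpos : ∀ j, 0 < q j ↔ 0 < Q j := tiltOutput_pos_iff hP hc
  have hWpos : ∀ i j, 0 < W i j → 0 < Q j := fun i j h => by
    simp only [W, tiltChannel] at h
    rwa [div_pos_iff_of_pos_right hc, mul_pos_iff_of_pos_right (exp_pos _)] at h
  have hmarg : ∑ i, ∑ j, P i * W i j * log (Q j / q j) = ∑ j, q j * log (Q j / q j) := by
    rw [Finset.sum_comm]
    simp only [← Finset.sum_mul, sum_mul_tiltChannel, W, q]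
  have hcost : ∑ i, ∑ j, P i * W i j * log (W i j / q j)
      = l * D - log c + ∑ j, q j * log (Q j / q j) :=
    calc _ = ∑ i, ∑ j, (l * (P i * W i j * ρ i j) - log c * (P i * W i j)
            + P i * W i j * log (Q j / q j)) :=
          Finset.sum_congr rfl fun i _ => Finset.sum_congr rfl fun j _ => by
            rw [mul_tiltChannel_mul_log hQ.1 hc (fun j => (hqpos j).2)]
            ring
      _ = l * ∑ i, ∑ j, P i * W i j * ρ i j - log c * ∑ i, P i * ∑ j, W i j
            + ∑ i, ∑ j, P i * W i j * log (Q j / q j) := by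
          simp only [Finset.sum_add_distrib, Finset.sum_sub_distrib, Finset.mul_sum]
      _ = _ := by simp only [W, hD, hmarg, sum_tiltChannel hc hrow, mul_one, hP.2]
  rw [wCost, if_pos fun i j h => (hqpos j).2 (hWpos i j h), ← hcost, Finset.sum_div]
  simp_rw [Finset.sum_div, logb, mul_div_assoc]

/-- The tilted channel attains `R(D)` for the output distribution `tiltOutput`, so by Gibbs'
inequality that distribution is `Q`. -/
theorem colMgf_eq_of_le_RofD (hP : IsPmf P) (hQ : IsPmf Q) (hc : 0 < c)
    (hrow : ∀ i, ∑ j, Q j * exp (l * ρ i j) = c)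
    (hD : ∑ i, ∑ j, P i * tiltChannel ρ Q l c i j * ρ i j = D)
    (hR : (((l * D - log c) / log 2 : ℝ) : EReal) ≤ RofD P ρ D) {j : Fin k} (hj : 0 < Q j) :
    colMgf P ρ j l = c := by
  have hq := isPmf_tiltOutput hP hQ hc hrow
  have hgibbs : 0 ≤ ∑ j, tiltOutput P ρ Q l c j * log (Q j / tiltOutput P ρ Q l c j) := by
    have hle := hR.trans ((RofD_le_wCost hq (tiltChannel_nonneg hQ.1 hc)
      (sum_tiltChannel hc hrow) hD.le).trans (wCost_tiltChannel hP hQ hc hrow hD).le)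
    rw [EReal.coe_le_coe_iff, div_le_div_iff_of_pos_right (log_pos one_lt_two)] at hle
    linarith
  have hqQ := congrFun (hq.eq_of_sum_mul_log_div_nonneg hQ
    (fun j => (tiltOutput_pos_iff hP hc j).1) hgibbs) j
  rw [tiltOutput, div_eq_iff hc.ne'] at hqQ
  exact mul_left_cancel₀ hj.ne' hqQ

theorem DegenAt.exists_tilt (hP : IsPmf P) (h : DegenAt P ρ D) :
    ∃ l c : ℝ, ∃ Q : Fin k → ℝ, l < 0 ∧ IsPmf Q ∧ 0 < c ∧
      (∀ i, ∑ j, Q j * exp (l * ρ i j) = c) ∧ (∀ j, 0 < Q j → colMgf P ρ j l = c) ∧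
      (RofD P ρ D).toReal = (l * D - log c) / log 2 := by
  obtain ⟨Q, hQ, -, l, hl, hderiv, hR, c, hrow⟩ := h
  obtain ⟨i₀, -⟩ := hP.exists_pos
  have hc : 0 < c := hrow i₀ ▸ hQ.sum_mul_exp_pos _
  rw [Lam_eq_log hP.2 hrow] at hR
  have hRval := EReal.eq_coe_div_of_coe_eq_coe_mul (log_pos one_lt_two) hR
  have hD : ∑ i, ∑ j, P i * tiltChannel ρ Q l c i j * ρ i j = D := by
    rw [hderiv.unique (hasDerivAt_Lam fun i => hrow i ▸ hc)]
    simp only [hrow, tiltChannel, Finset.mul_sum, Finset.sum_div]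
    exact Finset.sum_congr rfl fun i _ => Finset.sum_congr rfl fun j _ => by ring
  exact ⟨l, c, Q, hl, hQ, hc, hrow, fun j => colMgf_eq_of_le_RofD hP hQ hc hrow hD hRval.ge,
    by rw [hRval, EReal.toReal_coe]⟩

end Degenerate

/-- Each `c D` being one of the finitely many values `colMgf P ρ j (l D)`, finitely many slopes
would give finitely many affine functions agreeing with `f` on the infinite set `S`. -/
lemma StrictConvexOn.infinite_image_tilt {k : ℕ} {P : Fin k → ℝ} {ρ : Fin k → Fin k → ℝ}
    {s S : Set ℝ} {f : ℝ → ℝ} (hf : StrictConvexOn ℝ s f) (hS : S ⊆ s) (hinf : S.Infinite)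
    {l c : ℝ → ℝ} (hfS : ∀ D ∈ S, f D = (l D * D - log (c D)) / log 2)
    (hc : ∀ D ∈ S, ∃ j, colMgf P ρ j (l D) = c D) : (l '' S).Infinite := by
  intro hfin
  refine hf.infinite_image_of_eq_affine hS hinf (fun D => (l D / log 2, -log (c D) / log 2))
    (fun D hD => by rw [hfS D hD]; ring) ?_
  refine ((hfin.prod (Set.finite_univ (α := Fin k))).image
    fun p => (p.1 / log 2, -log (colMgf P ρ p.2 p.1) / log 2)).subset ?_
  rintro _ ⟨D, hD, rfl⟩
  obtain ⟨j, hj⟩ := hc D hD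
  exact ⟨(l D, j), ⟨Set.mem_image_of_mem l hD, Set.mem_univ j⟩, by simp [hj]⟩

theorem frequently_colMgf_eq {k : ℕ} {P : Fin k → ℝ} {ρ : Fin k → Fin k → ℝ} (hP : IsPmf P)
    (hρnn : ∀ i j, 0 ≤ ρ i j) (hρ : ∀ i j, ρ i j = 0 ↔ i = j)
    (hconv : StrictConvexOn ℝ (Set.Ioo 0 (Dmax P ρ)) (fun D => (RofD P ρ D).toReal))
    (hinf : {D ∈ Set.Ioo 0 (Dmax P ρ) | DegenAt P ρ D}.Infinite) (j j' : Fin k) :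
    ∃ᶠ x in atBot, colMgf P ρ j x = colMgf P ρ j' x := by
  set S := {D ∈ Set.Ioo 0 (Dmax P ρ) | DegenAt P ρ D}
  choose! l c Q hl hQ hc hrow hcol hR using fun D (hD : D ∈ S) => hD.2.exists_tilt hP
  obtain ⟨b, hb⟩ : ∃ b : Finset (Fin k), {D ∈ S | univ.filter (0 < Q D ·) = b}.Infinite := by
    by_contra! h
    exact hinf ((Set.finite_iUnion h).subset fun D hD => Set.mem_iUnion.2 ⟨_, hD, rfl⟩)
  set Sb := {D ∈ S | univ.filter (0 < Q D ·) = b}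
  have hLinf : (l '' Sb).Infinite := hconv.infinite_image_tilt (fun D hD => hD.1.1) hb
    (fun D hD => hR D hD.1) fun D hD => (hQ D hD.1).exists_pos.imp (hcol D hD.1)
  have hLbdd : BddAbove (l '' Sb) := ⟨0, by rintro _ ⟨D, hD, rfl⟩; exact (hl D hD.1).le⟩
  have hsupp : ∀ D ∈ Sb, ∀ j, 0 < Q D j ↔ j ∈ b := fun D hD j => by
    rw [← hD.2, Finset.mem_filter, and_iff_right (mem_univ j)]
  by_cases hbu : b = univ
  · refine (((analyticOnNhd_colMgf j).sub (analyticOnNhd_colMgf j')).frequently_atBot_eq_zero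
      hLinf hLbdd ?_).mono fun x => sub_eq_zero.1
    rintro _ ⟨D, hD, rfl⟩
    simp only [Pi.sub_apply, hcol D hD.1 j ((hsupp D hD j).2 (hbu ▸ mem_univ j)),
      hcol D hD.1 j' ((hsupp D hD j').2 (hbu ▸ mem_univ j')), sub_self]
  · refine absurd (finite_of_forall_exists_sum_mul_exp_eq_one hρnn hρ hbu hLbdd ?_) hLinf
    rintro _ ⟨D, hD, rfl⟩
    refine ⟨fun j => Q D j / c D, fun i => ?_⟩
    rw [Finset.sum_subset (subset_univ b) fun j _ hj => ?_]
    · simp_rw [div_mul_eq_mul_div, ← Finset.sum_div, hrow D hD.1, div_self (hc D hD.1).ne']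
    · rw [← hsupp D hD, not_lt] at hj
      simp [le_antisymm hj ((hQ D hD.1).1 j)]

theorem stmt_2_general {k : ℕ}
    (P : Fin k → ℝ) (ρ : Fin k → Fin k → ℝ)
    (hP : IsPmf P)
    (hρnn : ∀ i j, 0 ≤ ρ i j) (hρsym : ∀ i j, ρ i j = ρ j i)
    (hρzero : ∀ i j, ρ i j = 0 ↔ i = j)
    (hconv : StrictConvexOn ℝ (Set.Ioo 0 (Dmax P ρ)) (fun D => (RofD P ρ D).toReal))
    (hinf : {D ∈ Set.Ioo 0 (Dmax P ρ) | DegenAt P ρ D}.Infinite) :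
    (∀ i, P i = 1 / (k : ℝ)) ∧ IsPermMeasure ρ := by
  have hlaw : ∀ j j' t, colLaw P ρ j t = colLaw P ρ j' t := fun j j' =>
    colLaw_eq_of_frequently_colMgf_eq (frequently_colMgf_eq hP hρnn hρzero hconv hinf j j')
  have hunif : ∀ i, P i = 1 / k := hP.eq_one_div_of_forall_eq fun i j => by
    rw [← colLaw_zero (P := P) hρzero i, ← colLaw_zero (P := P) hρzero j, hlaw i j]
  obtain ⟨i₀, -⟩ := hP.exists_pos
  refine ⟨hunif, isPermMeasure_of_card_fiber_eq hρsym fun j j' t => ?_⟩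
  have hk : (1 / k : ℝ) ≠ 0 := one_div_ne_zero (Nat.cast_ne_zero.2 (Fin.pos i₀).ne')
  have hlawt := hlaw j j' t
  rw [colLaw_of_uniform hunif, colLaw_of_uniform hunif] at hlawt
  exact_mod_cast mul_right_cancel₀ hk hlawt

/-- **Corollary 1.** If the rate-distortion function is strictly convex on
`(0, D_max)` and the degeneracy condition holds at infinitely many
`D ∈ (0, D_max)`, then `P` is uniform and `ρ` is a permutation distortion
measure. -/
theorem stmt_2 {k : ℕ} (hk : 2 ≤ k)
    (P : Fin k → ℝ) (ρ : Fin k → Fin k → ℝ)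
    (hP : IsPmf P) (hPpos : ∀ i, 0 < P i)
    (hρnn : ∀ i j, 0 ≤ ρ i j) (hρsym : ∀ i j, ρ i j = ρ j i)
    (hρzero : ∀ i j, ρ i j = 0 ↔ i = j)
    (hDmax : 0 < Dmax P ρ)
    (hconv : StrictConvexOn ℝ (Set.Ioo 0 (Dmax P ρ)) (fun D => (RofD P ρ D).toReal))
    (hinf : {D ∈ Set.Ioo 0 (Dmax P ρ) | DegenAt P ρ D}.Infinite) :
    (∀ i, P i = 1 / (k : ℝ)) ∧ IsPermMeasure ρ :=
  stmt_2_general P ρ hP hρnn hρsym hρzero hconv hinf
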